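/- arXiv:math/0408404 — 5 statements merged into one kernel-verified Lean document; each statement's English description precedes it below -/
import Mathlib

section
/- Every locally polynomial function f : ℤ_p → E (a function which on each coset of some p^N ℤ_p agrees with a polynomial) is of class C^r for every r ∈ ℝ_{≥0}. -/
open Filter

variable {p : ℕ} [Fact p.Prime]

/-- The Mahler coefficients `a_n(f) = ∑_{i=0}^n (-1)^i C(n,i) f(n-i)`. -/
noncomputable def mahlerCoeff {E : Type*} [NontriviallyNormedField E]
    (f : ℤ_[p] → E) (n : ℕ) : E :=
  ∑ i ∈ Finset.range (n + 1), (-1 : E) ^ i * (n.choose i : E) * f ((n - i : ℕ) : ℤ_[p])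

/-- `f : ℤ_p → E` is of class `C^r` if `n^r |a_n(f)| → 0`. -/
def IsCr {E : Type*} [NontriviallyNormedField E] (r : ℝ) (f : ℤ_[p] → E) : Prop :=
  Tendsto (fun n : ℕ => (n : ℝ) ^ r * ‖mahlerCoeff f n‖) atTop (nhds (0 : ℝ))

/-- `f : ℤ_p → E` is locally polynomial if there is `N` such that on each coset of
`p^N ℤ_p` it agrees with a polynomial. -/
def IsLocPoly {E : Type*} [NontriviallyNormedField E] [NormedAlgebra ℚ_[p] E]
    (f : ℤ_[p] → E) : Prop :=
  ∃ N : ℕ, ∀ a : ℤ_[p], ∃ P : Polynomial E, ∀ z : ℤ_[p],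
    ‖z - a‖ ≤ (p : ℝ) ^ (-(N : ℤ)) → f z = P.eval (algebraMap ℚ_[p] E (z : ℚ_[p]))

/-!
Let `T` be translation by `1` on functions `ℤ_[p] → E`, so that `a_n(f) = ((T - 1)^n f)(0)`.
If `f` agrees with polynomials of degree `< k` on the cosets of `q ℤ_[p]`, `q = p^N`, then
`(T^q - 1)^k f = 0`. Since `(X - 1)^q ≡ X^q - 1 mod p` in `ℤ[X]`, the polynomial
`(X - 1)^(q (k + m))` lies in the ideal `((X^q - 1)^k) + (p^m)`, so `a_{n + q (k + m)}(f)` is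
`p^m` times an integral combination of values of `f`. Hence `‖a_n(f)‖ = O(p^(-n/q))`, which beats
every power of `n`.
-/

open Finset Polynomial fwdDiff_aux
open scoped fwdDiff

section ShiftOperator

variable {M G : Type*} [AddCommMonoid M] (h : M)

theorem aeval_shiftₗ_X_pow_sub_one_pow_apply [AddCommGroup G] (k n : ℕ) (g : M → G) :
    aeval (shiftₗ M G h) (((X : ℤ[X]) ^ k - 1) ^ n) g = (Δ_[k • h])^[n] g := by
  have : aeval (shiftₗ M G h) ((X : ℤ[X]) ^ k - 1) = fwdDiffₗ M G (k • h) := by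
    ext g y
    simp [shiftₗ_pow_apply, fwdDiff]
  rw [map_pow, this, coe_fwdDiffₗ_pow]

theorem aeval_shiftₗ_apply [AddCommGroup G] (Q : ℤ[X]) (g : M → G) (y : M) :
    aeval (shiftₗ M G h) Q g y = ∑ i ∈ range (Q.natDegree + 1), Q.coeff i • g (y + i • h) := by
  simp [aeval_eq_sum_range, shiftₗ_pow_apply]

theorem norm_aeval_shiftₗ_apply_le [SeminormedAddCommGroup G] [IsUltrametricDist G] (Q : ℤ[X])
    {g : M → G} {B : ℝ} (hB : ∀ x, ‖g x‖ ≤ B) (y : M) :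
    ‖aeval (shiftₗ M G h) Q g y‖ ≤ B := by
  rw [aeval_shiftₗ_apply]
  exact IsUltrametricDist.norm_sum_le_of_forall_le_of_nonneg ((norm_nonneg _).trans (hB y))
    fun i _ ↦ (IsUltrametricDist.norm_zsmul_le _ _).trans (hB _)

end ShiftOperator

section Frobenius

variable {R : Type*} [CommRing R] (p)

theorem sub_pow_prime_pow_sub_mem_span (x y : R) (N : ℕ) :
    (x - y) ^ p ^ N - (x ^ p ^ N - y ^ p ^ N) ∈ Ideal.span {(p : R)} := by
  by_cases hp : IsUnit (p : R)
  · simp [Ideal.span_singleton_eq_top.mpr hp]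
  have := CharP.quotient R p hp
  rw [← Ideal.Quotient.eq_zero_iff_mem]
  simp [sub_pow_char_pow]

theorem sub_pow_mem_span_sup_span (x y : R) (N k m : ℕ) :
    (x - y) ^ (p ^ N * (k + m)) ∈
      Ideal.span {(x ^ p ^ N - y ^ p ^ N) ^ k} ⊔ Ideal.span {(p : R) ^ m} := by
  have hmem : (x - y) ^ p ^ N ∈ Ideal.span {x ^ p ^ N - y ^ p ^ N} ⊔ Ideal.span {(p : R)} := by
    rw [← sub_add_cancel ((x - y) ^ p ^ N) (x ^ p ^ N - y ^ p ^ N)]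
    exact add_mem (Ideal.mem_sup_right (sub_pow_prime_pow_sub_mem_span p x y N))
      (Ideal.mem_sup_left (Ideal.mem_span_singleton_self _))
  rw [pow_mul, ← Ideal.span_singleton_pow, ← Ideal.span_singleton_pow]
  exact Ideal.sup_pow_add_le_pow_sup_pow (Ideal.pow_mem_pow hmem _)

end Frobenius

theorem tendsto_rpow_mul_pow_div_atTop {ρ : ℝ} (hρ0 : 0 < ρ) (hρ1 : ρ < 1) {q : ℕ} (hq : 0 < q)
    (r : ℝ) : Tendsto (fun n : ℕ ↦ (n : ℝ) ^ r * ρ ^ (n / q)) atTop (nhds 0) := by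
  have hlog : Real.log ρ < 0 := Real.log_neg hρ0 hρ1
  set b := -Real.log ρ / q with hb_def
  have hb : 0 < b := div_pos (neg_pos.mpr hlog) (mod_cast hq)
  have hlim := ((tendsto_rpow_mul_exp_neg_mul_atTop_nhds_zero r b hb).comp
    tendsto_natCast_atTop_atTop).const_mul ρ⁻¹
  rw [mul_zero] at hlim
  refine squeeze_zero (fun n ↦ by positivity) (fun n ↦ ?_) hlim
  have hfloor : (n : ℝ) / q - 1 ≤ (n / q : ℕ) := by
    rw [← Nat.floor_div_eq_div (K := ℝ)]
    exact (Nat.sub_one_lt_floor _).le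
  have hpow : ρ ^ (n / q) ≤ ρ⁻¹ * Real.exp (-b * n) := by
    rw [← Real.exp_log hρ0, ← Real.exp_nat_mul, ← Real.exp_neg, ← Real.exp_add]
    refine Real.exp_le_exp.mpr ?_
    have hexp : -Real.log ρ + -b * n = Real.log ρ * (n / q - 1) := by rw [hb_def]; ring
    rw [hexp, mul_comm]
    exact mul_le_mul_of_nonpos_left hfloor hlog.le
  calc (n : ℝ) ^ r * ρ ^ (n / q) ≤ (n : ℝ) ^ r * (ρ⁻¹ * Real.exp (-b * n)) := by gcongr
    _ = _ := by simp only [Function.comp_apply]; ring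

section MahlerCoeff

variable {E : Type*} [NontriviallyNormedField E]

theorem mahlerCoeff_eq_fwdDiff_iter (f : ℤ_[p] → E) (n : ℕ) :
    mahlerCoeff f n = (Δ_[1])^[n] f 0 := by
  rw [fwdDiff_iter_eq_sum_shift, mahlerCoeff, ← sum_range_reflect]
  refine sum_congr rfl fun i hi ↦ ?_
  have hi : i ≤ n := Nat.lt_succ_iff.mp (mem_range.mp hi)
  rw [Nat.add_sub_cancel, Nat.sub_sub_self hi, Nat.choose_symm hi, zero_add, nsmul_one,
    zsmul_eq_mul]
  push_cast
  ring

theorem mahlerCoeff_eq_aeval_shiftₗ (f : ℤ_[p] → E) (n : ℕ) :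
    mahlerCoeff f n = aeval (shiftₗ ℤ_[p] E 1) (((X : ℤ[X]) - 1) ^ n) f 0 := by
  have := congr_fun (aeval_shiftₗ_X_pow_sub_one_pow_apply (1 : ℤ_[p]) 1 n f) 0
  rw [pow_one, one_smul] at this
  rw [this, mahlerCoeff_eq_fwdDiff_iter]

variable [NormedAlgebra ℚ_[p] E]

theorem norm_mahlerCoeff_add_le {f : ℤ_[p] → E} {N k : ℕ}
    (hf : (Δ_[(p : ℤ_[p]) ^ N])^[k] f = 0) {B : ℝ} (hB : ∀ z, ‖f z‖ ≤ B) (n m : ℕ) :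
    ‖mahlerCoeff f (n + p ^ N * (k + m))‖ ≤ (p : ℝ)⁻¹ ^ m * B := by
  have := IsUltrametricDist.of_normedAlgebra (L := E) ℚ_[p]
  obtain ⟨V, W, hVW⟩ : ∃ V W : ℤ[X],
      (X - 1) ^ (p ^ N * (k + m)) = (X ^ p ^ N - 1) ^ k * V + (p : ℤ[X]) ^ m * W := by
    have := sub_pow_mem_span_sup_span p (X : ℤ[X]) 1 N k m
    simp only [one_pow, Submodule.mem_sup, Ideal.mem_span_singleton'] at this
    obtain ⟨_, ⟨V, rfl⟩, _, ⟨W, rfl⟩, h⟩ := this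
    exact ⟨V, W, by rw [← h]; ring⟩
  have hpoly : ((X : ℤ[X]) - 1) ^ (n + p ^ N * (k + m)) =
      ((X - 1) ^ n * V) * (X ^ p ^ N - 1) ^ k + (p : ℤ[X]) ^ m * ((X - 1) ^ n * W) := by
    rw [pow_add, hVW]
    ring
  have hkill : aeval (shiftₗ ℤ_[p] E 1) (((X : ℤ[X]) ^ p ^ N - 1) ^ k) f = 0 := by
    rw [aeval_shiftₗ_X_pow_sub_one_pow_apply, nsmul_one, Nat.cast_pow]
    exact hf
  have hsplit : mahlerCoeff f (n + p ^ N * (k + m)) =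
      (p ^ m : ℕ) • aeval (shiftₗ ℤ_[p] E 1) (((X : ℤ[X]) - 1) ^ n * W) f 0 := by
    rw [mahlerCoeff_eq_aeval_shiftₗ, hpoly, map_add, map_mul, map_mul, LinearMap.add_apply,
      Module.End.mul_apply, hkill, map_zero, zero_add, map_mul, map_pow, map_natCast,
      Module.End.mul_apply, ← Nat.cast_pow, Module.End.natCast_apply, Pi.smul_apply]
  rw [hsplit, ← Nat.cast_smul_eq_nsmul ℚ_[p], norm_smul, Nat.cast_pow, norm_pow, Padic.norm_p]
  exact mul_le_mul_of_nonneg_left (norm_aeval_shiftₗ_apply_le _ _ hB _) (by positivity)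

theorem norm_mahlerCoeff_le {f : ℤ_[p] → E} {N k : ℕ} (hf : (Δ_[(p : ℤ_[p]) ^ N])^[k] f = 0)
    {B : ℝ} (hB : ∀ z, ‖f z‖ ≤ B) {n : ℕ} (hn : p ^ N * k ≤ n) :
    ‖mahlerCoeff f n‖ ≤ (p : ℝ) ^ k * B * (p : ℝ)⁻¹ ^ (n / p ^ N) := by
  have hk : k ≤ n / p ^ N := (Nat.le_div_iff_mul_le (pow_pos (Fact.out : p.Prime).pos N)).mpr
    (by rwa [mul_comm])
  obtain ⟨m, hm⟩ := Nat.exists_eq_add_of_le hk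
  have hn' : n = n % p ^ N + p ^ N * (k + m) := by rw [← hm, Nat.mod_add_div]
  have hp0 : (p : ℝ) ≠ 0 := by exact_mod_cast (Fact.out : p.Prime).ne_zero
  calc ‖mahlerCoeff f n‖ ≤ (p : ℝ)⁻¹ ^ m * B := hn' ▸ norm_mahlerCoeff_add_le hf hB _ m
    _ = (p : ℝ) ^ k * B * (p : ℝ)⁻¹ ^ (n / p ^ N) := by
      rw [hm, pow_add, inv_pow, inv_pow]
      field_simp

end MahlerCoeff

section LocPoly

variable {E : Type*} [NontriviallyNormedField E] [NormedAlgebra ℚ_[p] E]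

theorem fwdDiff_iter_p_pow_eq_zero_of_eq_eval {f : ℤ_[p] → E} {N n : ℕ} {a : ℤ_[p]} {P : E[X]}
    (hP : ∀ z : ℤ_[p], ‖z - a‖ ≤ (p : ℝ) ^ (-(N : ℤ)) →
      f z = P.eval (algebraMap ℚ_[p] E (z : ℚ_[p])))
    (hdeg : P.natDegree < n) {z : ℤ_[p]} (hz : ‖z - a‖ ≤ (p : ℝ) ^ (-(N : ℤ))) :
    (Δ_[(p : ℤ_[p]) ^ N])^[n] f z = 0 := by
  set Q := P.comp (C (algebraMap ℚ_[p] E ((p : ℚ_[p]) ^ N)) * X + C (algebraMap ℚ_[p] E z))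
  have hQ : Q.natDegree < n := by
    refine lt_of_le_of_lt (natDegree_comp_le.trans ?_) hdeg
    exact (Nat.mul_le_mul_left _ natDegree_linear_le).trans_eq (mul_one _)
  have hval : ∀ j : ℕ, f (z + j • (p : ℤ_[p]) ^ N) = Q.eval (j : E) := by
    intro j
    rw [hP]
    · simp [Q, add_comm, mul_comm]
    · have hj : ‖j • (p : ℤ_[p]) ^ N‖ ≤ (p : ℝ) ^ (-(N : ℤ)) :=
        (IsUltrametricDist.norm_nsmul_le _ _).trans (PadicInt.norm_p_pow N).le
      rw [add_sub_right_comm]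
      exact (PadicInt.nonarchimedean _ _).trans (max_le hz hj)
  rw [fwdDiff_iter_eq_sum_shift]
  simp_rw [hval]
  have h0 := congr_fun (fwdDiff_iter_eq_zero_of_degree_lt hQ) 0
  simpa only [fwdDiff_iter_eq_sum_shift, zero_add, nsmul_one, Pi.zero_apply] using h0

theorem IsLocPoly.exists_fwdDiff_iter_eq_zero {f : ℤ_[p] → E} (hf : IsLocPoly f) :
    ∃ N k : ℕ, (Δ_[(p : ℤ_[p]) ^ N])^[k] f = 0 := by
  obtain ⟨N, hN⟩ := hf
  choose P hP using hN
  -- the representatives `z.appr N < p ^ N` of the cosets give a uniform degree bound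
  refine ⟨N, (range (p ^ N)).sup (fun j : ℕ ↦ (P j).natDegree) + 1, funext fun z ↦ ?_⟩
  have hz : ‖z - (z.appr N : ℤ_[p])‖ ≤ (p : ℝ) ^ (-(N : ℤ)) :=
    (PadicInt.norm_le_pow_iff_mem_span_pow _ _).mpr (z.appr_spec N)
  have hdeg := le_sup (f := fun j : ℕ ↦ (P j).natDegree) (mem_range.mpr (z.appr_lt N))
  exact fwdDiff_iter_p_pow_eq_zero_of_eq_eval (hP _) (Nat.lt_succ_of_le hdeg) hz

theorem IsLocPoly.continuous {f : ℤ_[p] → E} (hf : IsLocPoly f) : Continuous f := by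
  obtain ⟨N, hN⟩ := hf
  refine continuous_iff_continuousAt.mpr fun a ↦ ?_
  obtain ⟨P, hP⟩ := hN a
  have hball : Metric.closedBall a ((p : ℝ) ^ (-(N : ℤ))) ∈ nhds a :=
    Metric.closedBall_mem_nhds _ (zpow_pos (mod_cast (Fact.out : p.Prime).pos) _)
  refine ContinuousAt.congr (f := fun z : ℤ_[p] ↦ P.eval (algebraMap ℚ_[p] E (z : ℚ_[p])))
    (P.continuous.comp ((continuous_algebraMap ℚ_[p] E).comp continuous_induced_dom)).continuousAt
    ?_
  filter_upwards [hball] with z hz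
  exact (hP z (by rwa [Metric.mem_closedBall, dist_eq_norm] at hz)).symm

end LocPoly

theorem isCr_of_eventually_norm_mahlerCoeff_le {E : Type*} [NontriviallyNormedField E]
    {f : ℤ_[p] → E} {q : ℕ} (hq : 0 < q) {C : ℝ}
    (hf : ∀ᶠ n in atTop, ‖mahlerCoeff f n‖ ≤ C * (p : ℝ)⁻¹ ^ (n / q)) (r : ℝ) : IsCr r f := by
  have hp : (1 : ℝ) < p := mod_cast (Fact.out : p.Prime).one_lt
  have hlim := (tendsto_rpow_mul_pow_div_atTop (inv_pos.mpr (zero_lt_one.trans hp))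
    (inv_lt_one_of_one_lt₀ hp) hq r).const_mul C
  rw [mul_zero] at hlim
  refine squeeze_zero' (.of_forall fun n ↦ by positivity) ?_ hlim
  filter_upwards [hf] with n hn
  calc (n : ℝ) ^ r * ‖mahlerCoeff f n‖ ≤ (n : ℝ) ^ r * (C * (p : ℝ)⁻¹ ^ (n / q)) := by gcongr
    _ = C * ((n : ℝ) ^ r * (p : ℝ)⁻¹ ^ (n / q)) := by ring

theorem isCr_of_isLocPoly_general {E : Type*} [NontriviallyNormedField E] [NormedAlgebra ℚ_[p] E]
    (f : ℤ_[p] → E) (hf : IsLocPoly f) :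
    ∀ r : ℝ, 0 ≤ r → IsCr r f := by
  intro r _
  obtain ⟨N, k, hk⟩ := hf.exists_fwdDiff_iter_eq_zero
  obtain ⟨B, hB⟩ : ∃ B, ∀ z, ‖f z‖ ≤ B := ⟨_, ContinuousMap.norm_coe_le_norm ⟨f, hf.continuous⟩⟩
  refine isCr_of_eventually_norm_mahlerCoeff_le (C := (p : ℝ) ^ k * B)
    (pow_pos (Fact.out : p.Prime).pos N) ?_ r
  filter_upwards [eventually_ge_atTop (p ^ N * k)] with n hn
  exact norm_mahlerCoeff_le hk hB hn

/-- Every locally polynomial function `ℤ_p → E` is of class `C^r` for all `r ≥ 0`. -/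
theorem isCr_of_isLocPoly {E : Type*} [NontriviallyNormedField E] [NormedAlgebra ℚ_[p] E]
    [FiniteDimensional ℚ_[p] E] (f : ℤ_[p] → E) (hf : IsLocPoly f) :
    ∀ r : ℝ, 0 ≤ r → IsCr r f :=
  isCr_of_isLocPoly_general f hf
end

section
/- Let 0 < val(β) ≤ val(α) with val(α) + val(β) = k−1 and 0 ≤ j < val(α). Then the function f : ℤ_p → E defined by f(z) = (α p β^{-1})^{val(z)} z^{k−2−j} for z ≠ 0 and f(0) = 0 is of class C^{val(α)} on ℤ_p. -/
open Filter Classical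

variable {p : ℕ} [Fact p.Prime]

section BreuilAux
open Polynomial Finset



/-- Shift operator on `ℕ → ℤ`. -/
noncomputable def σ : Module.End ℤ (ℕ → ℤ) where
  toFun f := fun x => f (x + 1)
  map_add' f g := rfl
  map_smul' c f := rfl

lemma sigma_pow_apply (m : ℕ) (F : ℕ → ℤ) (x : ℕ) : (σ ^ m) F x = F (x + m) := by
  induction m generalizing F x with
  | zero => rfl
  | succ m ih =>
    rw [pow_succ, Module.End.mul_apply, ih]
    show F (x + m + 1) = F (x + (m + 1))
    ring_nf

lemma dvd_act (a : ℤ) (W : ℤ[X]) (F : ℕ → ℤ) (h : ∀ x, a ∣ F x) (x : ℕ) :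
    a ∣ (aeval σ W) F x := by
  induction W using Polynomial.induction_on' generalizing x with
  | add P Q hP hQ => rw [map_add, LinearMap.add_apply]; exact dvd_add (hP x) (hQ x)
  | monomial n c =>
    rw [aeval_monomial, Module.End.mul_apply, Module.algebraMap_end_apply]
    show a ∣ c • ((σ ^ n) F x)
    rw [sigma_pow_apply, smul_eq_mul]
    exact Dvd.dvd.mul_left (h _) c

lemma act_expand (n : ℕ) (F : ℕ → ℤ) (x : ℕ) :
    (aeval σ ((X - 1 : ℤ[X]) ^ n)) F x
      = ∑ i ∈ range (n + 1), (-1 : ℤ) ^ (n - i) * (n.choose i) * F (x + i) := by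
  have hexp : ((X : ℤ[X]) - 1) ^ n
      = ∑ i ∈ range (n + 1), C ((-1 : ℤ) ^ (n - i) * (n.choose i)) * X ^ i := by
    rw [sub_eq_add_neg, add_pow]
    refine Finset.sum_congr rfl fun i hi => ?_
    rw [C_mul, C_pow, map_neg, C_1, C_eq_natCast]
    ring
  rw [hexp, map_sum, LinearMap.sum_apply, Finset.sum_apply]
  refine Finset.sum_congr rfl fun i hi => ?_
  rw [map_mul, aeval_C, map_pow, aeval_X, Module.End.mul_apply, Module.algebraMap_end_apply]
  show ((-1 : ℤ) ^ (n - i) * (n.choose i)) • ((σ ^ i) F x) = _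
  rw [sigma_pow_apply, smul_eq_mul]



/-- one finite-difference step on polynomials -/
noncomputable def pdiff (Q : ℤ[X]) : ℤ[X] := Q.comp (X + 1) - Q

lemma natDegree_X_add_one : ((X : ℤ[X]) + 1).natDegree = 1 := by
  simpa using natDegree_X_add_C (1 : ℤ)

lemma natDegree_pdiff_le {Q : ℤ[X]} {d : ℕ} (h : Q.natDegree ≤ d + 1) :
    (pdiff Q).natDegree ≤ d := by
  rcases eq_or_ne Q 0 with rfl | hQ0
  · simp [pdiff]
  have hcomp : (Q.comp (X + 1)).natDegree = Q.natDegree := by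
    rw [natDegree_comp, natDegree_X_add_one, mul_one]
  have hC : (Q.comp (X + 1)).leadingCoeff = Q.leadingCoeff := by
    rw [leadingCoeff_comp (by rw [natDegree_X_add_one]; norm_num)]
    have : ((X : ℤ[X]) + 1).leadingCoeff = 1 := by
      simpa using leadingCoeff_X_add_C (1 : ℤ)
    rw [this, one_pow, mul_one]
  rcases lt_or_eq_of_le h with hlt | heq
  · refine le_trans (natDegree_sub_le _ _) ?_
    rw [hcomp, max_self]
    omega
  · have hcomp0 : Q.comp (X + 1) ≠ 0 := fun hz => hQ0 <| leadingCoeff_eq_zero.mp <| by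
      rw [← hC, hz, leadingCoeff_zero]
    have hdeg : (Q.comp (X + 1)).degree = Q.degree := by
      rw [degree_eq_natDegree hcomp0, degree_eq_natDegree hQ0, hcomp]
    rcases eq_or_ne (pdiff Q) 0 with hz | hz
    · simp [hz]
    · have hlt2 : (Q.comp (X + 1) - Q).degree < (Q.comp (X + 1)).degree :=
        degree_sub_lt hdeg hcomp0 hC
      have h3 : (pdiff Q).natDegree < (Q.comp (X + 1)).natDegree :=
        natDegree_lt_natDegree hz hlt2
      omega

lemma pdiff_iter_eq_zero : ∀ (d : ℕ) (Q : ℤ[X]), Q.natDegree ≤ d → pdiff^[d + 1] Q = 0 := by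
  intro d
  induction d with
  | zero =>
    intro Q hQ
    rw [Polynomial.eq_C_of_natDegree_le_zero hQ]
    simp [pdiff]
  | succ d ih =>
    intro Q hQ
    rw [Function.iterate_succ_apply]
    exact ih _ (natDegree_pdiff_le hQ)

def Fq (t : ℕ) (Q : ℤ[X]) : ℕ → ℤ := fun x => if t ∣ x then Q.eval ((x / t : ℕ) : ℤ) else 0

lemma act_tsub_Fq (t : ℕ) (ht : 0 < t) (Q : ℤ[X]) :
    (aeval σ ((X : ℤ[X]) ^ t - 1)) (Fq t Q) = Fq t (pdiff Q) := by
  funext x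
  rw [map_sub, map_pow, aeval_X, map_one, LinearMap.sub_apply, Module.End.one_apply,
    Pi.sub_apply, sigma_pow_apply]
  simp only [Fq]
  by_cases hd : t ∣ x
  · rw [if_pos (Nat.dvd_add_self_right.mpr hd), if_pos hd, if_pos hd,
      Nat.add_div_right x ht, pdiff, eval_sub, eval_comp, eval_add, eval_X, eval_one]
    push_cast
    ring
  · rw [if_neg (fun h => hd (Nat.dvd_add_self_right.mp h)), if_neg hd, if_neg hd, sub_zero]

lemma act_tsub_pow_Fq (t : ℕ) (ht : 0 < t) (m : ℕ) (Q : ℤ[X]) :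
    (aeval σ (((X : ℤ[X]) ^ t - 1) ^ m)) (Fq t Q) = Fq t (pdiff^[m] Q) := by
  induction m generalizing Q with
  | zero => simp
  | succ m ih =>
    rw [pow_succ', map_mul, Module.End.mul_apply, ih, act_tsub_Fq t ht,
      Function.iterate_succ_apply']

def Gf (p l d : ℕ) : ℕ → ℤ := fun x => if p ^ l ∣ x then (x : ℤ) ^ d else 0

lemma Gf_eq_Fq (p l d : ℕ) (hp : 0 < p) : Gf p l d = Fq (p ^ l) ((C ((p : ℤ) ^ l) * X) ^ d) := by
  funext x
  simp only [Gf, Fq]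
  by_cases hd : p ^ l ∣ x
  · rw [if_pos hd, if_pos hd, eval_pow, eval_mul, eval_C, eval_X]
    congr 1
    have h2 : (p : ℤ) ^ l * ((x / p ^ l : ℕ) : ℤ) = (x : ℤ) := by
      have h3 := congrArg (Nat.cast : ℕ → ℤ) (Nat.mul_div_cancel' hd)
      rw [Nat.cast_mul, Nat.cast_pow] at h3
      exact h3
    rw [h2]
  · rw [if_neg hd, if_neg hd]

lemma act_kill (p l d : ℕ) (hp : 0 < p) :
    (aeval σ (((X : ℤ[X]) ^ (p ^ l) - 1) ^ (d + 1))) (Gf p l d) = 0 := by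
  rw [Gf_eq_Fq p l d hp, act_tsub_pow_Fq _ (pow_pos hp l),
    pdiff_iter_eq_zero d _ ?_]
  · funext x
    simp [Fq]
  · rw [natDegree_pow]
    exact le_trans (Nat.mul_le_mul_left d
      (le_trans (natDegree_C_mul_le _ _) natDegree_X.le)) (mul_one d).le


lemma exists_frob (p : ℕ) (hp : p.Prime) (l : ℕ) :
    ∃ hh : ℤ[X], ((X : ℤ[X]) - 1) ^ (p ^ l) = ((X : ℤ[X]) ^ (p ^ l) - 1) + C (p : ℤ) * hh := by
  have hdvd : C (p : ℤ) ∣ ((X : ℤ[X]) - 1) ^ (p ^ l) - ((X : ℤ[X]) ^ (p ^ l) - 1) := by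
    rw [C_dvd_iff_dvd_coeff]
    intro i
    have hmap : Polynomial.map (Int.castRingHom (ZMod p))
        (((X : ℤ[X]) - 1) ^ (p ^ l) - ((X : ℤ[X]) ^ (p ^ l) - 1)) = 0 := by
      haveI : Fact p.Prime := ⟨hp⟩
      rw [Polynomial.map_sub, Polynomial.map_pow, Polynomial.map_sub, Polynomial.map_sub,
        Polynomial.map_pow, Polynomial.map_one, Polynomial.map_X, sub_pow_char_pow, one_pow,
        sub_self]
    have h2 := congrArg (fun Q => Polynomial.coeff Q i) hmap
    simp only [Polynomial.coeff_map, Polynomial.coeff_zero, Int.coe_castRingHom] at h2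
    exact (ZMod.intCast_zmod_eq_zero_iff_dvd _ p).mp h2
  obtain ⟨hh, h⟩ := hdvd
  exact ⟨hh, by linear_combination h⟩

lemma core_dvd (p : ℕ) (hp : p.Prime) (l d : ℕ) :
    ∀ n x, ((p : ℤ)) ^ (l * d + n / ((d + 1) * p ^ l)) ∣
      (aeval σ (((X : ℤ[X]) - 1) ^ n)) (Gf p l d) x := by
  obtain ⟨hh, hfrob⟩ := exists_frob p hp l
  set q := (d + 1) * p ^ l with hq
  have hq0 : 0 < q := Nat.mul_pos (Nat.succ_pos d) (pow_pos hp.pos l)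
  have hbase : ∀ x, ((p : ℤ)) ^ (l * d) ∣ Gf p l d x := by
    intro x
    simp only [Gf]
    split_ifs with h
    · obtain ⟨y, rfl⟩ := h
      rw [Nat.cast_mul, mul_pow, Nat.cast_pow, ← pow_mul]
      exact Dvd.dvd.mul_right dvd_rfl _
    · exact dvd_zero _
  obtain ⟨K, hK⟩ : ∃ K : ℤ[X],
      ((X : ℤ[X]) - 1) ^ q = ((X : ℤ[X]) ^ (p ^ l) - 1) ^ (d + 1) + C (p : ℤ) * K := by
    have h1 : ((X : ℤ[X]) - 1) ^ q = (((X : ℤ[X]) - 1) ^ (p ^ l)) ^ (d + 1) := by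
      rw [← pow_mul, hq, mul_comm]
    obtain ⟨K1, hK1⟩ := sub_dvd_pow_sub_pow (((X : ℤ[X]) - 1) ^ (p ^ l))
      ((X : ℤ[X]) ^ (p ^ l) - 1) (d + 1)
    refine ⟨hh * K1, ?_⟩
    rw [h1]
    have h2 : ((X : ℤ[X]) - 1) ^ (p ^ l) - ((X : ℤ[X]) ^ (p ^ l) - 1) = C (p : ℤ) * hh := by
      linear_combination hfrob
    rw [h2] at hK1
    linear_combination hK1
  intro n
  induction n using Nat.strong_induction_on with
  | _ n IH =>
    rcases lt_or_ge n q with hn | hn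
    · rw [Nat.div_eq_of_lt hn, add_zero]
      intro x
      exact dvd_act _ _ _ hbase x
    · intro x
      have hmain : (aeval σ (((X : ℤ[X]) - 1) ^ n)) (Gf p l d) x
          = (p : ℤ) * ((aeval σ (K * ((X : ℤ[X]) - 1) ^ (n - q)))) (Gf p l d) x := by
        conv_lhs => rw [← pow_sub_mul_pow ((X : ℤ[X]) - 1) hn, hK]
        rw [mul_add, map_add, LinearMap.add_apply, Pi.add_apply]
        have hz : (aeval σ (((X : ℤ[X]) - 1) ^ (n - q) * ((X : ℤ[X]) ^ (p ^ l) - 1) ^ (d + 1)))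
            (Gf p l d) = 0 := by
          rw [map_mul, Module.End.mul_apply, act_kill p l d hp.pos, map_zero]
        rw [hz, Pi.zero_apply, zero_add]
        have hcomm : ((X : ℤ[X]) - 1) ^ (n - q) * (C (p : ℤ) * K)
            = C (p : ℤ) * (K * ((X : ℤ[X]) - 1) ^ (n - q)) := by ring
        rw [hcomm, map_mul, Module.End.mul_apply, aeval_C, Module.algebraMap_end_apply,
          Pi.smul_apply, smul_eq_mul]
      rw [hmain]
      have hdivq : n / q = (n - q) / q + 1 := Nat.div_eq_sub_div hq0 hn
      rw [hdivq, ← add_assoc, pow_succ]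
      have hsub : ∀ y, ((p : ℤ)) ^ (l * d + (n - q) / q) ∣
          (aeval σ (((X : ℤ[X]) - 1) ^ (n - q))) (Gf p l d) y :=
        IH (n - q) (Nat.sub_lt (lt_of_lt_of_le hq0 hn) hq0)
      rw [map_mul, Module.End.mul_apply]
      rw [mul_comm ((p : ℤ))]
      exact mul_dvd_mul (dvd_act _ _ _ hsub x) dvd_rfl


section Dint
variable (p : ℕ) [hp : Fact p.Prime]



def Dint (d n l : ℕ) : ℤ :=
  ∑ m ∈ range (n + 1), if m ≠ 0 ∧ padicValNat p m = l
    then (-1 : ℤ) ^ (n - m) * (n.choose m) * (m : ℤ) ^ d else 0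

lemma Dint_eq (d n l : ℕ) :
    Dint p d n l
      = (∑ m ∈ range (n + 1), (-1 : ℤ) ^ (n - m) * (n.choose m) * Gf p l d m)
        - (∑ m ∈ range (n + 1), (-1 : ℤ) ^ (n - m) * (n.choose m) * Gf p (l + 1) d m) := by
  rw [← Finset.sum_sub_distrib]
  refine Finset.sum_congr rfl fun m _ => ?_
  rw [← mul_sub]
  rcases eq_or_ne m 0 with rfl | hm0
  · simp [Gf]
  have hv : ∀ k : ℕ, p ^ k ∣ m ↔ k ≤ padicValNat p m := fun k => padicValNat_dvd_iff_le hm0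
  simp only [Gf]
  rcases eq_or_ne (padicValNat p m) l with hvl | hvl
  · rw [if_pos ⟨hm0, hvl⟩, if_pos ((hv l).mpr hvl.ge),
      if_neg (fun h => by have := (hv (l+1)).mp h; omega), sub_zero]
  · rw [if_neg (fun h => hvl h.2)]
    by_cases h1 : p ^ l ∣ m
    · have hle : l ≤ padicValNat p m := (hv l).mp h1
      have hlt : l + 1 ≤ padicValNat p m := by omega
      rw [if_pos h1, if_pos ((hv (l+1)).mpr hlt), sub_self, mul_zero]
    · have : ¬ p ^ (l + 1) ∣ m := fun h => h1 (dvd_trans (pow_dvd_pow p (Nat.le_succ l)) h)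
      rw [if_neg h1, if_neg this, sub_self, mul_zero]


lemma Dint_dvd (d n l : ℕ) :
    ((p : ℤ)) ^ (l * d + n / ((d + 1) * p ^ (l + 1))) ∣ Dint p d n l := by
  rw [Dint_eq]
  have e1 := core_dvd p hp.out l d n 0
  have e2 := core_dvd p hp.out (l + 1) d n 0
  rw [act_expand] at e1 e2
  simp only [zero_add, Gf] at e1 e2
  refine dvd_sub (dvd_trans (pow_dvd_pow _ ?_) e1) (dvd_trans (pow_dvd_pow _ ?_) e2)
  · have h1 : n / ((d + 1) * p ^ (l + 1)) ≤ n / ((d + 1) * p ^ l) :=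
      Nat.div_le_div_left (Nat.mul_le_mul_left _
        (Nat.pow_le_pow_right hp.out.pos (Nat.le_succ l)))
        (Nat.mul_pos (Nat.succ_pos d) (pow_pos hp.out.pos l))
    omega
  · have h2 : l * d ≤ (l + 1) * d := Nat.mul_le_mul_right d (Nat.le_succ l)
    omega

end Dint
end BreuilAux
section MahlerId
open Polynomial Finset

variable {p : ℕ} [hp : Fact p.Prime]

lemma val_natCast_aux (m : ℕ) : ((m : ℤ_[p])).valuation = (padicValNat p m : ℤ) := by
  rw [← PadicInt.valuation_coe, PadicInt.coe_natCast, Padic.valuation_natCast]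

lemma padicValNat_le_self {m : ℕ} (hm : m ≠ 0) : padicValNat p m ≤ m := by
  have h1 : p ^ padicValNat p m ∣ m := pow_padicValNat_dvd
  have h2 : p ^ padicValNat p m ≤ m := Nat.le_of_dvd (Nat.pos_of_ne_zero hm) h1
  have h3 : padicValNat p m < 2 ^ padicValNat p m := Nat.lt_two_pow_self
  have h4 : 2 ^ padicValNat p m ≤ p ^ padicValNat p m :=
    Nat.pow_le_pow_left hp.out.two_le _
  omega

lemma mahlerCoeff_eq_sum_Dint {E : Type*} [NontriviallyNormedField E] [NormedAlgebra ℚ_[p] E]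
    (c : E) (d : ℕ) (n : ℕ) :
    mahlerCoeff (fun z : ℤ_[p] =>
        if z = 0 then 0 else c ^ z.valuation * (algebraMap ℚ_[p] E (z : ℚ_[p])) ^ d) n
      = ∑ l ∈ range (n + 1), c ^ l * ((Dint p d n l : ℤ) : E) := by
  rw [mahlerCoeff, ← Finset.sum_range_reflect]
  have hL : ∀ m ∈ range (n + 1),
      (-1 : E) ^ (n + 1 - 1 - m) * (n.choose (n + 1 - 1 - m) : E) *
        (fun z : ℤ_[p] => if z = 0 then 0
          else c ^ z.valuation * (algebraMap ℚ_[p] E (z : ℚ_[p])) ^ d)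
          ((n - (n + 1 - 1 - m) : ℕ) : ℤ_[p])
      = (if m ≠ 0 then (-1 : E) ^ (n - m) * (n.choose m : E) *
          (c ^ (padicValNat p m) * (m : E) ^ d) else 0) := by
    intro m hm
    rw [mem_range] at hm
    have hm' : m ≤ n := by omega
    have h1 : n + 1 - 1 - m = n - m := by omega
    have h2 : n - (n - m) = m := by omega
    rw [h1, h2, Nat.choose_symm hm']
    rcases eq_or_ne m 0 with rfl | hm0
    · simp
    · rw [if_pos hm0]
      have hz : ((m : ℕ) : ℤ_[p]) ≠ 0 := Nat.cast_ne_zero.mpr hm0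
      simp only []
      have hv : ((m : ℤ_[p])).valuation = padicValNat p m := by exact_mod_cast val_natCast_aux m
      rw [if_neg hz, hv, PadicInt.coe_natCast, map_natCast]
  rw [Finset.sum_congr rfl hL]
  -- now RHS side
  have hR : ∀ l ∈ range (n + 1), c ^ l * ((Dint p d n l : ℤ) : E)
      = ∑ m ∈ range (n + 1), (if m ≠ 0 ∧ padicValNat p m = l
          then c ^ l * ((-1 : E) ^ (n - m) * (n.choose m : E) * (m : E) ^ d) else 0) := by
    intro l _
    rw [Dint]
    push_cast
    rw [Finset.mul_sum]
    refine Finset.sum_congr rfl fun m _ => ?_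
    split_ifs with h
    · push_cast
      ring
    · rw [mul_zero]
  rw [Finset.sum_congr rfl hR, Finset.sum_comm]
  refine Finset.sum_congr rfl fun m hm => ?_
  rcases eq_or_ne m 0 with rfl | hm0
  · simp
  · rw [if_pos hm0]
    have hv : padicValNat p m ∈ range (n + 1) := by
      rw [mem_range]
      rw [mem_range] at hm
      have := padicValNat_le_self (p := p) hm0
      omega
    have : ∀ l ∈ range (n + 1), (if m ≠ 0 ∧ padicValNat p m = l
          then c ^ l * ((-1 : E) ^ (n - m) * (n.choose m : E) * (m : E) ^ d) else 0)
        = (if padicValNat p m = l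
          then c ^ l * ((-1 : E) ^ (n - m) * (n.choose m : E) * (m : E) ^ d) else 0) := by
      intro l _
      by_cases h : padicValNat p m = l
      · rw [if_pos h, if_pos ⟨hm0, h⟩]
      · rw [if_neg h, if_neg (fun hc => h hc.2)]
    rw [Finset.sum_congr rfl this, Finset.sum_ite_eq (range (n + 1)) (padicValNat p m), if_pos hv]
    ring

end MahlerId
section NormLayer
open Polynomial Finset

variable {p : ℕ} [hp : Fact p.Prime] {E : Type*} [NontriviallyNormedField E]
  [NormedAlgebra ℚ_[p] E]

lemma norm_algebraMap_padic (q : ℚ_[p]) : ‖algebraMap ℚ_[p] E q‖ = ‖q‖ := by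
  rcases eq_or_ne q 0 with rfl | hq
  · simp
  have key : ∀ r : ℚ_[p], ‖algebraMap ℚ_[p] E r‖ ≤ ‖r‖ := fun r => by
    rw [Algebra.algebraMap_eq_smul_one]
    calc ‖r • (1 : E)‖ ≤ ‖r‖ * ‖(1 : E)‖ := norm_smul_le r 1
    _ = ‖r‖ := by rw [norm_one, mul_one]
  have h1 := key q
  have h2 := key q⁻¹
  have h3 : ‖algebraMap ℚ_[p] E q‖ * ‖algebraMap ℚ_[p] E q⁻¹‖ = 1 := by
    rw [← norm_mul, ← map_mul, mul_inv_cancel₀ hq, map_one, norm_one]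
  have h4 : ‖q‖ * ‖q⁻¹‖ = 1 := by rw [← norm_mul, mul_inv_cancel₀ hq, norm_one]
  have h5 : 0 < ‖q‖ := norm_pos_iff.mpr hq
  have h6 : 0 < ‖q⁻¹‖ := norm_pos_iff.mpr (inv_ne_zero hq)
  have h7 : 0 < ‖algebraMap ℚ_[p] E q‖ := by
    rcases (norm_nonneg (algebraMap ℚ_[p] E q)).lt_or_eq with h | h
    · exact h
    · exfalso; rw [← h, zero_mul] at h3; norm_num at h3
  nlinarith [h1, h2]

lemma norm_intCast_le_one_E (hA : Nonempty (NormedAlgebra ℚ_[p] E)) (m : ℤ) : ‖(m : E)‖ ≤ 1 := by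
  rw [← map_intCast (algebraMap ℚ_[p] E), norm_algebraMap_padic]
  exact Padic.norm_int_le_one m

lemma norm_p_E : ‖((p : ℕ) : E)‖ = ((p : ℝ))⁻¹ := by
  rw [← map_natCast (algebraMap ℚ_[p] E), norm_algebraMap_padic]
  exact Padic.norm_p

lemma norm_Dint_le (d n l : ℕ) :
    ‖((Dint p d n l : ℤ) : E)‖ ≤ ((p : ℝ))⁻¹ ^ (l * d + n / ((d + 1) * p ^ (l + 1))) := by
  obtain ⟨cc, hcc⟩ := Dint_dvd p d n l
  rw [hcc]
  push_cast
  rw [norm_mul, norm_pow]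
  rw [norm_p_E]
  have h1 : (0 : ℝ) ≤ ((p : ℝ))⁻¹ ^ (l * d + n / ((d + 1) * p ^ (l + 1))) := by positivity
  exact mul_le_of_le_one_right h1 (norm_intCast_le_one_E (p := p) ⟨inferInstance⟩ cc)

end NormLayer

set_option maxHeartbeats 2000000 in
/-- Let `0 < val(β) ≤ val(α)` with `val(α) + val(β) = k - 1` (valuations expressed through
the norm, normalized by `val(p) = 1`) and `0 ≤ j < val(α)`. Then the function
`z ↦ (α p β⁻¹)^{val(z)} z^{k-2-j}` (extended by `0` at `z = 0`) is of class `C^{val(α)}`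
on `ℤ_p`. -/
theorem isCr_valAlpha {E : Type*} [NontriviallyNormedField E] [NormedAlgebra ℚ_[p] E]
    [FiniteDimensional ℚ_[p] E]
    (k : ℕ) (hk : 2 ≤ k) (α β : E) (hα0 : α ≠ 0) (hβ0 : β ≠ 0) (vα vβ : ℝ)
    (hvα : ‖α‖ = (p : ℝ) ^ (-vα)) (hvβ : ‖β‖ = (p : ℝ) ^ (-vβ))
    (hβpos : 0 < vβ) (hle : vβ ≤ vα) (hsum : vα + vβ = (k : ℝ) - 1)
    (j : ℕ) (hj : (j : ℝ) < vα) :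
    IsCr vα (fun z : ℤ_[p] =>
      if z = 0 then 0
      else (α * (p : E) * β⁻¹) ^ z.valuation * (algebraMap ℚ_[p] E (z : ℚ_[p])) ^ (k - 2 - j)) := by

  have hpp : p.Prime := Fact.out
  have hp1 : (1 : ℝ) < (p : ℝ) := by exact_mod_cast hpp.one_lt
  have hp0 : (0 : ℝ) < (p : ℝ) := by linarith
  set d : ℕ := k - 2 - j with hdd
  set c : E := α * (p : E) * β⁻¹ with hc
  have hvα_pos : 0 < vα := lt_of_lt_of_le hβpos hle
  have hjk : j + 2 ≤ k := by
    have h1 : vα < (k : ℝ) - 1 := by linarith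
    have h2 : (j : ℝ) + 1 < (k : ℝ) := by linarith
    have h3 : j + 1 < k := by exact_mod_cast h2
    omega
  have hdR : (d : ℝ) = (k : ℝ) - 2 - (j : ℝ) := by
    have h4 : d + j + 2 = k := by omega
    have h5 := congrArg (Nat.cast (R := ℝ)) h4
    push_cast at h5
    linarith
  set w : ℝ := vα + 1 - vβ with hw
  set W : ℝ := w + d with hWdef
  have hαW : vα < W := by rw [hWdef, hw, hdR]; linarith
  -- norm of c
  have hnc : ‖c‖ = (p : ℝ) ^ (-w) := by
    rw [hc, norm_mul, norm_mul, norm_inv, hvα, hvβ]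
    have hpE : ‖(p : E)‖ = (p : ℝ) ^ (-(1 : ℝ)) := by
      rw [(by push_cast; ring : (p : E) = ((p : ℕ) : E)), norm_p_E, Real.rpow_neg_one]
    rw [hpE, ← Real.rpow_neg hp0.le, ← Real.rpow_add hp0, ← Real.rpow_add hp0, hw]
    ring_nf
  -- constants
  set ε : ℝ := (W - vα) / 2 with hεdef
  set θ : ℝ := (vα + W) / 2 with hθdef
  have hεθ : ε + θ = W := by rw [hεdef, hθdef]; ring
  have hεpos : 0 < ε := by rw [hεdef]; linarith
  have hθα : vα < θ := by rw [hθdef]; linarith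
  have hθpos : 0 < θ := lt_trans hvα_pos hθα
  set ρ : ℝ := (vα / θ + 1) / 2 with hρdef
  have hρ1 : ρ < 1 := by
    rw [hρdef]
    have : vα / θ < 1 := (div_lt_one hθpos).mpr hθα
    linarith
  have hρpos : 0 < ρ := by
    rw [hρdef]
    have : 0 < vα / θ := div_pos hvα_pos hθpos
    linarith
  set θ2 : ℝ := θ * ρ with hθ2def
  have hθ2α : vα < θ2 := by
    rw [hθ2def, hρdef]
    have h6 : θ * ((vα / θ + 1) / 2) = (vα + θ) / 2 := by field_simp
    rw [h6]; linarith
  set r : ℝ := (p : ℝ) ^ (-ε) with hrdef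
  have hr0 : 0 ≤ r := Real.rpow_nonneg hp0.le _
  have hr1 : r < 1 := Real.rpow_lt_one_of_one_lt_of_neg hp1 (by linarith)
  set Cg : ℝ := 1 / (1 - r) with hCgdef
  have hCg0 : 0 < Cg := by
    have h24' : (0:ℝ) < 1 - r := by linarith
    rw [hCgdef]
    positivity
  set B : ℕ → ℝ := fun n =>
    (p : ℝ) * (p : ℝ) ^ (-((n : ℝ) ^ (1 - ρ) / (((d : ℝ) + 1) * (p : ℝ)))) with hBdef
  have hB0 : ∀ n, 0 ≤ B n := fun n => by
    have : (0:ℝ) ≤ (p : ℝ) ^ (-((n : ℝ) ^ (1 - ρ) / (((d : ℝ) + 1) * (p : ℝ)))) :=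
      Real.rpow_nonneg hp0.le _
    have := mul_nonneg hp0.le this
    simpa [hBdef] using this
  set Ψ : ℕ → ℝ := fun n => max ((n : ℝ) ^ (-θ2)) (B n) with hΨdef
  have hΨ0 : ∀ n, 0 ≤ Ψ n := fun n => le_max_of_le_right (hB0 n)
  -- per-term bound
  have hterm : ∀ n : ℕ, 1 ≤ n → ∀ l, l ∈ Finset.range (n + 1) →
      ‖c ^ l * ((Dint p d n l : ℤ) : E)‖ ≤ r ^ l * Ψ n := by
    intro n hn l _
    have hn0 : (0 : ℝ) < (n : ℝ) := by exact_mod_cast hn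
    set e : ℕ := n / ((d + 1) * p ^ (l + 1)) with hedef
    have h7 : ‖c ^ l * ((Dint p d n l : ℤ) : E)‖
        ≤ (p : ℝ) ^ (-(w * l)) * (p : ℝ) ^ (-((l * d + e : ℕ) : ℝ)) := by
      rw [norm_mul, norm_pow, hnc]
      have e1 : ((p : ℝ) ^ (-w)) ^ l = (p : ℝ) ^ (-(w * l)) := by
        rw [← Real.rpow_natCast ((p : ℝ) ^ (-w)) l, ← Real.rpow_mul hp0.le]
        ring_nf
      have e2 : ((p : ℝ))⁻¹ ^ (l * d + e) = (p : ℝ) ^ (-((l * d + e : ℕ) : ℝ)) := by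
        rw [inv_pow, ← Real.rpow_natCast (p : ℝ) (l * d + e), ← Real.rpow_neg hp0.le]
      rw [e1]
      exact mul_le_mul_of_nonneg_left (le_trans (norm_Dint_le d n l) (le_of_eq e2))
        (Real.rpow_nonneg hp0.le _)
    have h8 : (p : ℝ) ^ (-(w * l)) * (p : ℝ) ^ (-((l * d + e : ℕ) : ℝ))
        = r ^ l * (p : ℝ) ^ (-(θ * l + e)) := by
      rw [← Real.rpow_add hp0, hrdef, ← Real.rpow_natCast ((p : ℝ) ^ (-ε)) l,
        ← Real.rpow_mul hp0.le, ← Real.rpow_add hp0]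
      congr 1
      push_cast
      have h9 : w + (d : ℝ) = ε + θ := by rw [hεθ, hWdef]
      linear_combination (-(l : ℝ)) * h9
    have hΨb : (p : ℝ) ^ (-(θ * l + e)) ≤ Ψ n := by
      rcases le_or_gt (ρ * Real.logb p n) (l : ℝ) with hcase | hcase
      · refine le_trans ?_ (le_max_left _ _)
        have hlogb : (p : ℝ) ^ (Real.logb p n) = n := Real.rpow_logb hp0 (ne_of_gt hp1) hn0
        have h10 : 0 ≤ (e : ℝ) := Nat.cast_nonneg e
        have h11 : θ * (ρ * Real.logb p n) ≤ θ * l := mul_le_mul_of_nonneg_left hcase hθpos.le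
        calc (p : ℝ) ^ (-(θ * l + e)) ≤ (p : ℝ) ^ (-(θ2 * Real.logb p n)) := by
              refine Real.rpow_le_rpow_of_exponent_le hp1.le ?_
              rw [hθ2def]
              nlinarith [h11]
        _ = ((p : ℝ) ^ (Real.logb p n)) ^ (-θ2) := by
              rw [← Real.rpow_mul hp0.le]
              ring_nf
        _ = (n : ℝ) ^ (-θ2) := by rw [hlogb]
      · refine le_trans ?_ (le_max_right _ _)
        have hD0 : 0 < (d + 1) * p ^ (l + 1) := Nat.mul_pos (Nat.succ_pos d) (pow_pos hpp.pos _)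
        have h12 : n < ((d + 1) * p ^ (l + 1)) * (e + 1) := by
          have h13 := Nat.div_add_mod n ((d + 1) * p ^ (l + 1))
          rw [← hedef] at h13
          have h14 := Nat.mod_lt n hD0
          have hmul : ((d + 1) * p ^ (l + 1)) * (e + 1)
              = ((d + 1) * p ^ (l + 1)) * e + ((d + 1) * p ^ (l + 1)) := by ring
          omega
        have h15 : (n : ℝ) < (((d : ℝ) + 1) * (p : ℝ) ^ ((l : ℝ) + 1)) * ((e : ℝ) + 1) := by
          have h16 := (Nat.cast_lt (α := ℝ)).mpr h12
          push_cast at h16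
          have h17 : (p : ℝ) ^ ((l : ℝ) + 1) = (p : ℝ) ^ (l + 1 : ℕ) := by
            rw [← Real.rpow_natCast (p : ℝ) (l + 1)]
            push_cast
            ring_nf
          rw [h17]
          exact h16
        have hplρ : (p : ℝ) ^ ((l : ℝ) + 1) ≤ (p : ℝ) * (n : ℝ) ^ ρ := by
          have h18 : (p : ℝ) ^ ((l : ℝ)) ≤ (p : ℝ) ^ (ρ * Real.logb p n) :=
            Real.rpow_le_rpow_of_exponent_le hp1.le hcase.le
          have h19 : (p : ℝ) ^ (ρ * Real.logb p n) = (n : ℝ) ^ ρ := by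
            rw [mul_comm, Real.rpow_mul hp0.le, Real.rpow_logb hp0 (ne_of_gt hp1) hn0]
          calc (p : ℝ) ^ ((l : ℝ) + 1) = (p : ℝ) ^ ((l : ℝ)) * (p : ℝ) := by
                rw [Real.rpow_add hp0, Real.rpow_one]
          _ ≤ (n : ℝ) ^ ρ * (p : ℝ) := by
                refine mul_le_mul_of_nonneg_right ?_ hp0.le
                rw [← h19]; exact h18
          _ = (p : ℝ) * (n : ℝ) ^ ρ := by ring
        have hnρ0 : (0 : ℝ) < (n : ℝ) ^ ρ := Real.rpow_pos_of_pos hn0 _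
        have h20 : (n : ℝ) ^ (1 - ρ) / (((d : ℝ) + 1) * (p : ℝ)) ≤ (e : ℝ) + 1 := by
          have h21 : (n : ℝ) < (((d : ℝ) + 1) * ((p : ℝ) * (n : ℝ) ^ ρ)) * ((e : ℝ) + 1) := by
            have hd1 : (0 : ℝ) < (d : ℝ) + 1 := by positivity
            have he1 : (0 : ℝ) < (e : ℝ) + 1 := by positivity
            have h21a := mul_le_mul_of_nonneg_right
              (mul_le_mul_of_nonneg_left hplρ hd1.le) he1.le
            linarith [h15, h21a]
          have h22 : (n : ℝ) ^ (1 - ρ) = (n : ℝ) / (n : ℝ) ^ ρ := by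
            rw [Real.rpow_sub hn0, Real.rpow_one]
          rw [h22, div_div]
          rw [div_le_iff₀ (by positivity)]
          nlinarith [h21]
        calc (p : ℝ) ^ (-(θ * l + e)) ≤ (p : ℝ) ^ (-(e : ℝ)) := by
              refine Real.rpow_le_rpow_of_exponent_le hp1.le ?_
              have : (0:ℝ) ≤ θ * l := mul_nonneg hθpos.le (Nat.cast_nonneg l)
              linarith
        _ ≤ (p : ℝ) ^ (1 - (n : ℝ) ^ (1 - ρ) / (((d : ℝ) + 1) * (p : ℝ))) := by
              refine Real.rpow_le_rpow_of_exponent_le hp1.le ?_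
              linarith
        _ = B n := by
              rw [hBdef]
              rw [(by ring : (1 : ℝ) - (n : ℝ) ^ (1 - ρ) / (((d : ℝ) + 1) * (p : ℝ))
                  = 1 + -((n : ℝ) ^ (1 - ρ) / (((d : ℝ) + 1) * (p : ℝ)))),
                Real.rpow_add hp0, Real.rpow_one]
    calc ‖c ^ l * ((Dint p d n l : ℤ) : E)‖ ≤ r ^ l * (p : ℝ) ^ (-(θ * l + e)) :=
          h7.trans (le_of_eq h8)
    _ ≤ r ^ l * Ψ n := mul_le_mul_of_nonneg_left hΨb (pow_nonneg hr0 l)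
  -- sum bound
  have hsum_bound : ∀ n : ℕ, 1 ≤ n →
      ‖mahlerCoeff (fun z : ℤ_[p] =>
        if z = 0 then 0 else c ^ z.valuation * (algebraMap ℚ_[p] E (z : ℚ_[p])) ^ d) n‖
      ≤ Cg * Ψ n := by
    intro n hn
    rw [mahlerCoeff_eq_sum_Dint c d n]
    have hgeo : ∑ l ∈ Finset.range (n + 1), r ^ l ≤ Cg := by
      rw [geom_sum_eq (ne_of_lt hr1) (n + 1), hCgdef]
      have h23 : (r ^ (n + 1) - 1) / (r - 1) = (1 - r ^ (n + 1)) / (1 - r) := by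
        rw [← neg_div_neg_eq]
        ring_nf
      rw [h23]
      have h24 : (0 : ℝ) < 1 - r := by linarith
      have h25 : 1 - r ^ (n + 1) ≤ 1 := by
        have := pow_nonneg hr0 (n + 1)
        linarith
      gcongr
    calc ‖∑ l ∈ Finset.range (n + 1), c ^ l * ((Dint p d n l : ℤ) : E)‖
        ≤ ∑ l ∈ Finset.range (n + 1), ‖c ^ l * ((Dint p d n l : ℤ) : E)‖ := norm_sum_le _ _
    _ ≤ ∑ l ∈ Finset.range (n + 1), r ^ l * Ψ n :=
          Finset.sum_le_sum (hterm n hn)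
    _ = (∑ l ∈ Finset.range (n + 1), r ^ l) * Ψ n := by rw [← Finset.sum_mul]
    _ ≤ Cg * Ψ n := mul_le_mul_of_nonneg_right hgeo (hΨ0 n)
  -- final limit
  show Filter.Tendsto _ Filter.atTop (nhds 0)
  have hT1 : Filter.Tendsto (fun n : ℕ => (n : ℝ) ^ vα * (n : ℝ) ^ (-θ2))
      Filter.atTop (nhds 0) := by
    have hbase : Filter.Tendsto (fun x : ℝ => x ^ (vα - θ2)) Filter.atTop (nhds 0) := by
      have h26 := tendsto_rpow_neg_atTop (by linarith : (0:ℝ) < θ2 - vα)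
      have h27 : (fun x : ℝ => x ^ (-(θ2 - vα))) = fun x : ℝ => x ^ (vα - θ2) := by
        funext x; ring_nf
      rwa [h27] at h26
    have hcomp := hbase.comp tendsto_natCast_atTop_atTop
    refine hcomp.congr' ?_
    filter_upwards [Filter.eventually_ge_atTop 1] with n hn
    have hn0 : (0 : ℝ) < (n : ℝ) := by exact_mod_cast hn
    show (n : ℝ) ^ (vα - θ2) = (n : ℝ) ^ vα * (n : ℝ) ^ (-θ2)
    rw [← Real.rpow_add hn0]
    ring_nf
  have hT2 : Filter.Tendsto (fun n : ℕ => (n : ℝ) ^ vα * B n) Filter.atTop (nhds 0) := by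
    set s : ℝ := vα / (1 - ρ) with hsdef
    set b : ℝ := Real.log p / (((d : ℝ) + 1) * (p : ℝ)) with hbdef
    have hb : 0 < b := div_pos (Real.log_pos hp1) (by positivity)
    have hbase := tendsto_rpow_mul_exp_neg_mul_atTop_nhds_zero s b hb
    have hmid : Filter.Tendsto (fun n : ℕ => (n : ℝ) ^ (1 - ρ)) Filter.atTop Filter.atTop :=
      (tendsto_rpow_atTop (by linarith)).comp tendsto_natCast_atTop_atTop
    have hcomp := hbase.comp hmid
    have hcomp2 := hcomp.const_mul (p : ℝ)
    rw [mul_zero] at hcomp2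
    refine hcomp2.congr' ?_
    filter_upwards [Filter.eventually_ge_atTop 1] with n hn
    have hn0 : (0 : ℝ) < (n : ℝ) := by exact_mod_cast hn
    show (p : ℝ) * (((n : ℝ) ^ (1 - ρ)) ^ s * Real.exp (-b * (n : ℝ) ^ (1 - ρ)))
        = (n : ℝ) ^ vα * B n
    have h28 : ((n : ℝ) ^ (1 - ρ)) ^ s = (n : ℝ) ^ vα := by
      rw [← Real.rpow_mul hn0.le]
      congr 1
      have hne : (1 : ℝ) - ρ ≠ 0 := by linarith
      rw [hsdef, mul_comm, div_mul_eq_mul_div, mul_div_assoc, div_self hne, mul_one]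
    have h29 : Real.exp (-b * (n : ℝ) ^ (1 - ρ))
        = (p : ℝ) ^ (-((n : ℝ) ^ (1 - ρ) / (((d : ℝ) + 1) * (p : ℝ)))) := by
      rw [Real.rpow_def_of_pos hp0]
      congr 1
      rw [hbdef]
      have hne2 : ((d : ℝ) + 1) * (p : ℝ) ≠ 0 := by positivity
      field_simp
      try ring
    rw [h28, h29, hBdef]
    ring
  have hTmax : Filter.Tendsto (fun n : ℕ => Cg * ((n : ℝ) ^ vα * Ψ n))
      Filter.atTop (nhds 0) := by
    have hmax := hT1.max hT2
    rw [max_self] at hmax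
    have h30 : ∀ n : ℕ, (n : ℝ) ^ vα * Ψ n
        = max ((n : ℝ) ^ vα * (n : ℝ) ^ (-θ2)) ((n : ℝ) ^ vα * B n) := fun n => by
      rw [hΨdef]
      exact mul_max_of_nonneg _ _ (Real.rpow_nonneg (Nat.cast_nonneg n) vα)
    have hfin := hmax.const_mul Cg
    rw [mul_zero] at hfin
    exact hfin.congr fun n => by rw [h30 n]
  refine squeeze_zero' ?_ ?_ hTmax
  · filter_upwards with n
    positivity
  · filter_upwards [Filter.eventually_ge_atTop 1] with n hn
    have h31 := hsum_bound n hn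
    have h32 : (0:ℝ) ≤ (n : ℝ) ^ vα := Real.rpow_nonneg (Nat.cast_nonneg n) vα
    calc (n : ℝ) ^ vα * ‖mahlerCoeff _ n‖ ≤ (n : ℝ) ^ vα * (Cg * Ψ n) :=
          mul_le_mul_of_nonneg_left h31 h32
    _ = Cg * ((n : ℝ) ^ vα * Ψ n) := by ring
end

section
/- Let q = φ(X)/X = ((1+X)^p − 1)/X ∈ ℤ_p[[X]]. For every ℓ ≥ 1, ψ(q^ℓ) is a polynomial in X of degree ≤ ℓ − 1 whose constant term is p^{ℓ−1}. -/
/-!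
Expanding `q = ∑_{a<p} (1+X)^a` gives `q^ℓ = ∑_g (1+X)^{g₁+⋯+g_ℓ}` over all `g ∈ {0,…,p-1}^ℓ`,
so `ψ(q^ℓ) = ∑_{p ∣ Σg} (1+X)^{Σg/p}`. Each exponent `Σg/p` is at most `ℓ - 1` because
`Σg < ℓp`, and the constant term counts the tuples with `p ∣ Σg`: the first `ℓ - 1` entries are
free and determine the last one, so there are `p^{ℓ-1}` of them.
-/

open PowerSeries

theorem PowerSeries.coeff_one_add_X_pow {R : Type*} [Semiring R] (n k : ℕ) :
    coeff k ((1 + X : R⟦X⟧) ^ n) = n.choose k := by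
  rw [← Polynomial.coeff_one_add_X_pow, ← Polynomial.coeff_coe]
  simp

theorem geom_sum_pow_eq_sum_piFinset {R : Type*} [CommSemiring R] (x : R) (p n : ℕ) :
    (∑ i ∈ Finset.range p, x ^ i) ^ n =
      ∑ g ∈ Fintype.piFinset fun _ : Fin n => Finset.range p, x ^ ∑ j, g j := by
  simp only [Finset.sum_pow', Finset.prod_pow_eq_pow_sum]

section

open Finset

variable {p n : ℕ}

theorem sum_lt_mul_of_mem_piFinset_range {g : Fin (n + 1) → ℕ}
    (hg : g ∈ Fintype.piFinset fun _ => range p) : ∑ i, g i < p * (n + 1) := by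
  simp only [Fintype.mem_piFinset, mem_range] at hg
  simpa [mul_comm] using sum_lt_sum_of_nonempty univ_nonempty fun i _ => hg i

variable (p n) in
theorem card_filter_dvd_sum_piFinset_range [NeZero p] :
    #{g ∈ Fintype.piFinset fun _ : Fin (n + 1) => range p | p ∣ ∑ i, g i} = p ^ n := by
  rw [← card_range p, ← Fintype.card_piFinset_const (range p) n, card_range]
  refine card_nbij' Fin.init (fun h => Fin.snoc h (-∑ i, (h i : ZMod p)).val) ?_ ?_ ?_ ?_
  all_goals intro g hg; simp only [mem_coe, mem_filter, Fintype.mem_piFinset, mem_range] at hg ⊢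
  · exact fun i => hg.1 _
  · refine ⟨Fin.lastCases (by simpa using ZMod.val_lt _) (by simpa using hg), ?_⟩
    rw [← ZMod.natCast_eq_zero_iff, Fin.sum_univ_castSucc]
    simp
  · have hsum := (ZMod.natCast_eq_zero_iff _ p).mpr hg.2
    rw [Nat.cast_sum, Fin.sum_univ_castSucc, add_eq_zero_iff_neg_eq] at hsum
    conv_rhs => rw [← Fin.snoc_init_self g]
    simp [Fin.init, hsum, Nat.mod_eq_of_lt (hg.1 _)]
  · exact Fin.init_snoc _ _

end

variable (p : ℕ) [Fact p.Prime]

/-- The element `q = φ(X)/X = ((1+X)^p - 1)/X = 1 + (1+X) + ⋯ + (1+X)^{p-1}` of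
`ℤ_p[[X]]`. -/
noncomputable def qElt : PowerSeries ℤ_[p] :=
  ∑ i ∈ Finset.range p, (1 + PowerSeries.X) ^ i

/-- Here `ψ` is the `ℤ_p`-linear left inverse of `φ : f(X) ↦ f((1+X)^p - 1)`, given by its values
on the powers of `1+X`; the first clause records that `q = φ(X)/X`. -/
theorem psi_q_pow {ℓ : ℕ} (hℓ : 1 ≤ ℓ)
    (ψ : PowerSeries ℤ_[p] →ₗ[ℤ_[p]] PowerSeries ℤ_[p])
    (hψ : ∀ i : ℕ, ψ ((1 + PowerSeries.X) ^ i) =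
      if p ∣ i then (1 + PowerSeries.X) ^ (i / p) else 0) :
    (PowerSeries.X * qElt p = (1 + PowerSeries.X) ^ p - 1) ∧
    (∀ m : ℕ, ℓ - 1 < m → PowerSeries.coeff (R := ℤ_[p]) m (ψ (qElt p ^ ℓ)) = 0) ∧
    PowerSeries.constantCoeff (R := ℤ_[p]) (ψ (qElt p ^ ℓ)) = (p : ℤ_[p]) ^ (ℓ - 1) := by
  obtain ⟨n, rfl⟩ := Nat.exists_eq_add_of_le' hℓ
  set S := Fintype.piFinset fun _ : Fin (n + 1) => Finset.range p
  have hψq : ψ (qElt p ^ (n + 1)) =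
      ∑ g ∈ S, if p ∣ ∑ i, g i then (1 + X) ^ ((∑ i, g i) / p) else 0 := by
    simp only [qElt, geom_sum_pow_eq_sum_piFinset, map_sum, hψ, S]
  refine ⟨by rw [qElt, mul_comm, ← geom_sum_mul, add_sub_cancel_left], fun m hm => ?_, ?_⟩
  · rw [hψq, map_sum]
    refine Finset.sum_eq_zero fun g hg => ?_
    have hdeg : (∑ i, g i) / p < m :=
      (Nat.div_lt_of_lt_mul (sum_lt_mul_of_mem_piFinset_range hg)).trans_le (by omega)
    split_ifs <;> simp [coeff_one_add_X_pow, Nat.choose_eq_zero_of_lt hdeg]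
  · simp [hψq, apply_ite, Finset.sum_boole, S, card_filter_dvd_sum_piFinset_range]
end

section
/- Let T be a ℤ_p-lattice in a crystalline representation V of Gal(ℚ̄_p/ℚ_p) with Hodge–Tate weights ≥ 0, and N(T) its Wach module (a free ℤ_p[[X]]-module stable under φ with N(T) ⊆ φ*(N(T))). Then ψ(N(T)) ⊆ N(T), and for ℓ ≥ 1, ψ(X^{-ℓ} N(T)) ⊆ p^{ℓ−1} X^{-ℓ} N(T) + X^{-ℓ+1} N(T). -/
/-- Let `T` be a lattice in a crystalline representation with Hodge–Tate weights `≥ 0`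
and `N(T)` its Wach module. Then `ψ(N(T)) ⊆ N(T)` and, for `ℓ ≥ 1`,
`ψ(X^{-ℓ} N(T)) ⊆ p^{ℓ-1} X^{-ℓ} N(T) + X^{-ℓ+1} N(T)`.

Following the context, we take as hypotheses the algebraic facts used in the proof:
`N(T)` is an additive subgroup `N` of a module `D` (playing the role of `D(T)[1/X]`)
over a ring `A ⊇ ℤ_p[[X]]` in which `X` is invertible, stable under multiplication by
`ι(ℤ_p[[X]])`; `φ` and `ψ` are additive operators on `D` with `ψ(λ • φ(d)) = ψ_A(λ) • d`,
`ψ_A` preserving `ι(ℤ_p[[X]])`; every `y ∈ N` can be written `y = ∑ ι(yᵢ) • φ(nᵢ)` with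
`nᵢ ∈ N` (i.e. `N ⊆ φ*(N)`); and `ψ_A(X^{-ℓ} ℤ_p[[X]]) ⊆ p^{ℓ-1} X^{-ℓ} ℤ_p[[X]] +
X^{-ℓ+1} ℤ_p[[X]]`. -/
theorem psi_wach_module {p : ℕ} [Fact p.Prime]
    {A : Type*} [CommRing A] (ι : PowerSeries ℤ_[p] →+* A)
    (Xu : Aˣ) (hXu : (Xu : A) = ι PowerSeries.X)
    {D : Type*} [AddCommGroup D] [Module A D]
    (φD : D →+ D) (ψD : D →+ D) (ψA : A →+ A)
    (hsemil : ∀ (a : A) (d : D), ψD (a • φD d) = ψA a • d)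
    (hψι : ∀ f : PowerSeries ℤ_[p], ∃ g : PowerSeries ℤ_[p], ψA (ι f) = ι g)
    (N : AddSubgroup D)
    (hNsmul : ∀ (f : PowerSeries ℤ_[p]) (x : D), x ∈ N → ι f • x ∈ N)
    (hNφ : ∀ y ∈ N, ∃ (n : ℕ) (c : Fin n → PowerSeries ℤ_[p]) (m : Fin n → D),
      (∀ i, m i ∈ N) ∧ y = ∑ i : Fin n, ι (c i) • φD (m i))
    (hψA : ∀ ℓ : ℕ, 1 ≤ ℓ → ∀ f : PowerSeries ℤ_[p],
      ∃ g h : PowerSeries ℤ_[p],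
        ψA (((Xu⁻¹ ^ ℓ : Aˣ) : A) * ι f)
          = (p : A) ^ (ℓ - 1) * ((Xu⁻¹ ^ ℓ : Aˣ) : A) * ι g
            + ((Xu⁻¹ ^ (ℓ - 1) : Aˣ) : A) * ι h) :
    (∀ x ∈ N, ψD x ∈ N) ∧
    (∀ ℓ : ℕ, 1 ≤ ℓ → ∀ x ∈ N, ∃ y z : D, y ∈ N ∧ z ∈ N ∧
      ψD (((Xu⁻¹ ^ ℓ : Aˣ) : A) • x)
        = ((p : A) ^ (ℓ - 1) * ((Xu⁻¹ ^ ℓ : Aˣ) : A)) • y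
          + ((Xu⁻¹ ^ (ℓ - 1) : Aˣ) : A) • z) := by
  constructor
  · intro x hx
    obtain ⟨n, c, m, hm, rfl⟩ := hNφ x hx
    rw [map_sum]
    refine sum_mem (fun i _ => ?_)
    rw [hsemil]
    obtain ⟨g, hg⟩ := hψι (c i)
    rw [hg]
    exact hNsmul g _ (hm i)
  · intro ℓ hℓ x hx
    obtain ⟨n, c, m, hm, rfl⟩ := hNφ x hx
    choose g h hgh using fun i => hψA ℓ hℓ (c i)
    refine ⟨∑ i, ι (g i) • m i, ∑ i, ι (h i) • m i,
      sum_mem (fun i _ => hNsmul _ _ (hm i)),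
      sum_mem (fun i _ => hNsmul _ _ (hm i)), ?_⟩
    rw [Finset.smul_sum, map_sum, Finset.smul_sum, Finset.smul_sum,
      ← Finset.sum_add_distrib]
    refine Finset.sum_congr rfl (fun i _ => ?_)
    rw [← mul_smul, hsemil, hgh, add_smul, mul_smul, mul_smul, mul_smul]
end

section
/- Let E be a finite extension of ℚ_p and α ∈ E with v_p(α) ≠ 0. Then the operator ψ − α is surjective on the p-adic completion D of E ⊗ (ℤ_p[[X]][1/X])^ (more generally on any E-Banach module D with a continuous operator ψ preserving a bounded O_E-lattice D⁰ with ψ(D⁰) ⊆ D⁰, and admitting a right inverse φ with ψφ = id, φ(D⁰) ⊆ D⁰): (a) if v_p(α) < 0 the series −α^{-1}(1 + α^{-1}ψ + (α^{-1}ψ)² + ⋯) converges and inverts ψ − α; (b) if v_p(α) > 0 then for every x, writing φ(x) = (1 − αφ)y with y = (1−αφ)^{-1}φ(x), one has x = (ψ − α)(y); hence ψ − α is surjective in both cases. -/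
/-!
Both cases are Neumann series. If `‖α‖ > 1`, the operator `α⁻¹ψ` is a power-bounded operator
scaled by a constant of norm `< 1`, so `1 - α⁻¹ψ` is inverted by `∑ (α⁻¹ψ)ⁿ`, and
`ψ - α = -α (1 - α⁻¹ψ)`. If `‖α‖ < 1`, the same argument inverts `1 - αφ`; solving
`(1 - αφ) y = φ x` and applying `ψ`, which is a left inverse of `φ`, gives `ψ y - α y = x`.
-/

section NeumannSeries

variable {E : Type*} [NontriviallyNormedField E]
  {D : Type*} [NormedAddCommGroup D] [NormedSpace E D]

theorem summable_pow_smul_pow_apply [CompleteSpace D] {T : D →L[E] D} {C : ℝ}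
    (hT : ∀ (n : ℕ) (x : D), ‖(T ^ n) x‖ ≤ C * ‖x‖) {c : E} (hc : ‖c‖ < 1) (x : D) :
    Summable fun n : ℕ => c ^ n • (T ^ n) x := by
  refine ((summable_geometric_of_lt_one (norm_nonneg c) hc).mul_right (C * ‖x‖)).of_norm_bounded
    fun n => ?_
  rw [norm_smul, norm_pow]
  exact mul_le_mul_of_nonneg_left (hT n x) (pow_nonneg (norm_nonneg c) n)

theorem HasSum.sub_smul_apply_eq {T : D →L[E] D} {c : E} {x y : D}
    (h : HasSum (fun n : ℕ => c ^ n • (T ^ n) x) y) : y - c • T y = x := by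
  have hshift : HasSum (fun n : ℕ => c ^ (n + 1) • (T ^ (n + 1)) x) (c • T y) := by
    convert (T.hasSum h).const_smul c using 2 with n
    rw [map_smul, smul_smul, pow_succ', pow_succ', mul_apply_eq_comp]
  have := (hasSum_nat_add_iff' 1).mpr h
  simp only [Finset.range_one, Finset.sum_singleton, pow_zero, one_smul, one_apply_eq_self] at this
  rw [hshift.unique this, sub_sub_cancel]

theorem exists_hasSum_and_sub_smul_eq_of_one_lt_norm [CompleteSpace D] {ψ : D →L[E] D} {C : ℝ}
    (hψ : ∀ (n : ℕ) (x : D), ‖(ψ ^ n) x‖ ≤ C * ‖x‖) {α : E} (hα : 1 < ‖α‖) (x : D) :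
    ∃ y : D, HasSum (fun n : ℕ => -(α⁻¹ ^ (n + 1) • (ψ ^ n) x)) y ∧ ψ y - α • y = x := by
  have hα0 : α ≠ 0 := norm_pos_iff.mp (one_pos.trans hα)
  have hinv : ‖α⁻¹‖ < 1 := by rw [norm_inv]; exact inv_lt_one_of_one_lt₀ hα
  obtain ⟨z, hz⟩ := summable_pow_smul_pow_apply hψ hinv x
  refine ⟨-α⁻¹ • z, ?_, ?_⟩
  · convert hz.const_smul (-α⁻¹) using 2 with n
    rw [pow_succ', mul_smul, neg_smul]
  · rw [← hz.sub_smul_apply_eq, map_smul, smul_smul, mul_neg, mul_inv_cancel₀ hα0]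
    module

theorem exists_hasSum_and_sub_smul_eq_of_norm_lt_one [CompleteSpace D] {ψ φ : D →L[E] D}
    (hcomp : ∀ x : D, ψ (φ x) = x) {C : ℝ} (hφ : ∀ (n : ℕ) (x : D), ‖(φ ^ n) x‖ ≤ C * ‖x‖)
    {α : E} (hα : ‖α‖ < 1) (x : D) :
    ∃ y : D, HasSum (fun n : ℕ => α ^ n • (φ ^ (n + 1)) x) y ∧ ψ y - α • y = x := by
  obtain ⟨y, hy⟩ := summable_pow_smul_pow_apply hφ hα (φ x)
  refine ⟨y, ?_, ?_⟩
  · convert hy using 3 with n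
    rw [pow_succ, mul_apply_eq_comp]
  · have := congrArg ψ hy.sub_smul_apply_eq
    rwa [map_sub, map_smul, hcomp, hcomp] at this

end NeumannSeries

theorem psi_sub_alpha_surjective_general
    {E : Type*} [NontriviallyNormedField E]
    {D : Type*} [NormedAddCommGroup D] [NormedSpace E D] [CompleteSpace D]
    (ψ φ : D →L[E] D) (hcomp : ∀ x : D, ψ (φ x) = x)
    (Cb : ℝ)
    (hψb : ∀ (n : ℕ) (x : D), ‖(ψ ^ n) x‖ ≤ Cb * ‖x‖)
    (hφb : ∀ (n : ℕ) (x : D), ‖(φ ^ n) x‖ ≤ Cb * ‖x‖)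
    (α : E) (hα1 : ‖α‖ ≠ 1) :
    -- (a) `v_p(α) < 0`
    (1 < ‖α‖ → ∀ x : D, ∃ y : D,
      HasSum (fun n : ℕ => -(α⁻¹ ^ (n + 1) • (ψ ^ n) x)) y ∧ ψ y - α • y = x) ∧
    -- (b) `v_p(α) > 0`
    (‖α‖ < 1 → ∀ x : D, ∃ y : D,
      HasSum (fun n : ℕ => α ^ n • (φ ^ (n + 1)) x) y ∧ ψ y - α • y = x) ∧
    -- hence surjectivity
    Function.Surjective (fun x : D => ψ x - α • x) := by
  have hlarge := exists_hasSum_and_sub_smul_eq_of_one_lt_norm hψb (α := α)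
  have hsmall := exists_hasSum_and_sub_smul_eq_of_norm_lt_one hcomp hφb (α := α)
  refine ⟨hlarge, hsmall, fun x => ?_⟩
  rcases hα1.lt_or_gt with h | h
  · obtain ⟨y, -, hy⟩ := hsmall h x
    exact ⟨y, hy⟩
  · obtain ⟨y, -, hy⟩ := hlarge h x
    exact ⟨y, hy⟩

/-- Let `D` be an `E`-Banach space with continuous operators `ψ, φ` such that `ψ ∘ φ = id`
and both preserve (up to a uniform constant) a bounded lattice, i.e. are power-bounded.
For `α ∈ E` with `v_p(α) ≠ 0` (i.e. `‖α‖ ≠ 1`), `ψ - α` is surjective on `D`: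
(a) if `v_p(α) < 0` (`‖α‖ > 1`), the geometric series `-α⁻¹ ∑ (α⁻¹ψ)^n x` converges to a
preimage of `x`; (b) if `v_p(α) > 0` (`‖α‖ < 1`), the series `y = ∑ αⁿ φ^{n+1} x`
(i.e. `y = (1 - αφ)⁻¹ φ(x)`) converges and `(ψ - α)(y) = x`. Hence `ψ - α` is surjective
in both cases. -/
theorem psi_sub_alpha_surjective {p : ℕ} [Fact p.Prime]
    {E : Type*} [NontriviallyNormedField E]
    {D : Type*} [NormedAddCommGroup D] [NormedSpace E D] [CompleteSpace D]
    (ψ φ : D →L[E] D) (hcomp : ∀ x : D, ψ (φ x) = x)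
    (Cb : ℝ) (hCb : 0 ≤ Cb)
    (hψb : ∀ (n : ℕ) (x : D), ‖(ψ ^ n) x‖ ≤ Cb * ‖x‖)
    (hφb : ∀ (n : ℕ) (x : D), ‖(φ ^ n) x‖ ≤ Cb * ‖x‖)
    (α : E) (hα0 : α ≠ 0) (hα1 : ‖α‖ ≠ 1) :
    -- (a) `v_p(α) < 0`
    (1 < ‖α‖ → ∀ x : D, ∃ y : D,
      HasSum (fun n : ℕ => -(α⁻¹ ^ (n + 1) • (ψ ^ n) x)) y ∧ ψ y - α • y = x) ∧
    -- (b) `v_p(α) > 0`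
    (‖α‖ < 1 → ∀ x : D, ∃ y : D,
      HasSum (fun n : ℕ => α ^ n • (φ ^ (n + 1)) x) y ∧ ψ y - α • y = x) ∧
    -- hence surjectivity
    Function.Surjective (fun x : D => ψ x - α • x) :=
  psi_sub_alpha_surjective_general ψ φ hcomp Cb hψb hφb α hα1
end
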